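/- arXiv:2106.15567 — 4 statements merged into one kernel-verified Lean document; each statement's English description precedes it below -/
import Mathlib

section
/- Let δ be an integer-valued predimension on finite subsets of a structure N satisfying submodularity in the form δ(C/A) ≥ δ(C/A∪B) for disjoint A,B,C, and define δ(X/Y) = δ(X∪Y) − δ(Y). Suppose A₁ ⊂ A₂ ⊂ A₃ are finite sets such that C₁ = A₂ \ A₁ and C₂ = A₃ \ A₂ are each 0-primitive over A₁ and A₂ respectively (i.e., δ(Cᵢ/Aᵢ)=0 and no proper nonempty subset C' of Cᵢ satisfies δ(C'/Aᵢ)=0). If C₂ is also 0-primitive over A₁, then C₁ is 0-primitive over A₁ ∪ C₂. -/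
namespace Stmt0

variable {α : Type*} [DecidableEq α]

/-- The relative predimension `δ(X/Y) = δ(X ∪ Y) − δ(Y)`. -/
def drel (δ : Finset α → ℤ) (X Y : Finset α) : ℤ := δ (X ∪ Y) - δ Y

/-- `C` is a 0-primitive extension of `A`: `C` is disjoint from `A`, `δ(C/A) = 0`,
and no proper nonempty subset `C'` of `C` satisfies `δ(C'/A) = 0`. -/
def ZeroPrim (δ : Finset α → ℤ) (C A : Finset α) : Prop :=
  Disjoint C A ∧ drel δ C A = 0 ∧
    ∀ C' : Finset α, C' ⊂ C → C'.Nonempty → drel δ C' A ≠ 0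

/-- if `C₁ = A₂ \ A₁` and `C₂ = A₃ \ A₂` are 0-primitive over `A₁` and `A₂`
respectively, and `C₂` is also 0-primitive over `A₁`, then `C₁` is 0-primitive over
`A₁ ∪ C₂`. -/
theorem zeroPrim_over_union (δ : Finset α → ℤ)
    (hsub : ∀ A B C : Finset α, Disjoint A B → Disjoint A C → Disjoint B C →
      drel δ C (A ∪ B) ≤ drel δ C A)
    (A₁ A₂ A₃ : Finset α) (h12 : A₁ ⊂ A₂) (h23 : A₂ ⊂ A₃)
    (C₁ C₂ : Finset α) (hC₁ : C₁ = A₂ \ A₁) (hC₂ : C₂ = A₃ \ A₂)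
    (hp1 : ZeroPrim δ C₁ A₁) (hp2 : ZeroPrim δ C₂ A₂)
    (hp2' : ZeroPrim δ C₂ A₁) :
    ZeroPrim δ C₁ (A₁ ∪ C₂) := by
  obtain ⟨d1, e1, p1⟩ := hp1
  obtain ⟨d2, e2, -⟩ := hp2
  obtain ⟨d2', e2', -⟩ := hp2'
  have hA2 : C₁ ∪ A₁ = A₂ := by
    rw [hC₁]; exact Finset.sdiff_union_of_subset h12.subset
  have chain : ∀ X Y A : Finset α,
      drel δ (X ∪ Y) A = drel δ Y A + drel δ X (Y ∪ A) := by
    intro X Y A; simp [drel, Finset.union_assoc]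
  have dC2C1 : Disjoint C₂ C₁ := by
    rw [hC₁]; exact d2.mono_right Finset.sdiff_subset
  -- δ(C₁ / A₁ ∪ C₂) = 0
  have key : drel δ C₂ A₁ + drel δ C₁ (C₂ ∪ A₁)
      = drel δ C₁ A₁ + drel δ C₂ (C₁ ∪ A₁) := by
    rw [← chain C₁ C₂ A₁, ← chain C₂ C₁ A₁, Finset.union_comm C₁ C₂]
  rw [hA2] at key
  rw [e1, e2, e2'] at key
  have e0 : drel δ C₁ (A₁ ∪ C₂) = 0 := by
    rw [Finset.union_comm A₁ C₂]; linarith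
  refine ⟨?_, e0, ?_⟩
  · rw [Finset.disjoint_union_right]; exact ⟨d1, dC2C1.symm⟩
  · intro C' hss hne h0
    have hC'C₁ : C' ⊆ C₁ := hss.subset
    have dC'A1 : Disjoint C' A₁ := d1.mono_left hC'C₁
    have dC2C' : Disjoint C₂ C' := dC2C1.mono_right hC'C₁
    -- δ(C'/A₁∪C₂) ≤ δ(C'/A₁)
    have h1 : drel δ C' (A₁ ∪ C₂) ≤ drel δ C' A₁ :=
      hsub A₁ C₂ C' d2'.symm dC'A1.symm dC2C'
    have hne0 : drel δ C' A₁ ≠ 0 := p1 C' hss hne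
    rw [h0] at h1
    -- δ(C₂/A₂) ≤ δ(C₂/A₁∪C')
    have hu : (A₁ ∪ C') ∪ (C₁ \ C') = A₂ := by
      rw [Finset.union_assoc, Finset.union_sdiff_of_subset hC'C₁,
        Finset.union_comm, hA2]
    have h3 : drel δ C₂ A₂ ≤ drel δ C₂ (A₁ ∪ C') := by
      have := hsub (A₁ ∪ C') (C₁ \ C') C₂ ?_ ?_ ?_
      · rwa [hu] at this
      · rw [Finset.disjoint_union_left]
        exact ⟨d1.symm.mono_right Finset.sdiff_subset,
          Finset.disjoint_sdiff⟩
      · rw [Finset.disjoint_union_left]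
        exact ⟨d2'.symm, dC2C'.symm⟩
      · exact (dC2C1.mono_right Finset.sdiff_subset).symm
    rw [e2] at h3
    -- chain on C' ∪ C₂ over A₁ two ways
    have key2 : drel δ C₂ A₁ + drel δ C' (C₂ ∪ A₁)
        = drel δ C' A₁ + drel δ C₂ (C' ∪ A₁) := by
      rw [← chain C' C₂ A₁, ← chain C₂ C' A₁, Finset.union_comm C' C₂]
    rw [e2', Finset.union_comm C₂ A₁, h0, Finset.union_comm C' A₁] at key2
    have : drel δ C' A₁ = 0 := by linarith
    exact hne0 this

end Stmt0
end

section
/- Let A and B be disjoint finite subsets of a model M of a Hrushovski strongly minimal theory with predimension δ, such that A/B is a good pair (A is 0-primitive over B and every element of B is related to an element of A), B ≤ M, and δ(B) = d(B) ≥ 1. Then A ∩ acl(∅) = ∅. -/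
namespace Stmt7

variable {α : Type*} [DecidableEq α]

/-- The Hrushovski predimension `δ(A) = |A| − r(A)` for a 3-hypergraph `H`. -/
noncomputable def hdelta (H : Set (Finset α)) (A : Finset α) : ℤ :=
  (A.card : ℤ) - ({e | e ∈ H ∧ e ⊆ A} : Set (Finset α)).ncard

/-- Relative predimension `δ(X/Y)`. -/
noncomputable def drel (H : Set (Finset α)) (X Y : Finset α) : ℤ :=
  hdelta H (X ∪ Y) - hdelta H Y

/-- `X ≤ Y`: `X` is strong in `Y`. -/
def StrongIn (H : Set (Finset α)) (X Y : Finset α) : Prop :=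
  ∀ Z : Finset α, X ⊆ Z → Z ⊆ Y → hdelta H X ≤ hdelta H Z

/-- `B` is strong in the whole structure (`B ≤ M`). -/
def Strong (H : Set (Finset α)) (B : Finset α) : Prop :=
  ∀ C : Finset α, B ⊆ C → hdelta H B ≤ hdelta H C

/-- `A` is a 0-primitive extension of `B`. -/
def ZeroPrim (H : Set (Finset α)) (A B : Finset α) : Prop :=
  Disjoint A B ∧ StrongIn H B (A ∪ B) ∧ drel H A B = 0 ∧
    ∀ A₀ : Finset α, A₀ ⊆ A → A₀.Nonempty → A₀ ≠ A →
      ¬ (StrongIn H B (B ∪ A₀) ∧ StrongIn H (B ∪ A₀) (B ∪ A) ∧ drel H A₀ B = 0)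

/-- `A/B` is a good pair: `A` is 0-primitive over `B` and every element of `B` is in
some relation with an element of `A`. -/
def GoodPair (H : Set (Finset α)) (A B : Finset α) : Prop :=
  ZeroPrim H A B ∧
    ∀ b ∈ B, ∃ e ∈ H, e ⊆ A ∪ B ∧ b ∈ e ∧ (e ∩ A).Nonempty

/-- The elements of `acl(∅)`: those lying in a finite strong set of predimension 0. -/
def aclZero (H : Set (Finset α)) : Set α :=
  {x | ∃ D : Finset α, x ∈ D ∧ Strong H D ∧ hdelta H D = 0}

/-- The edge set within `X` is finite. -/
lemma edges_finite (H : Set (Finset α)) (X : Finset α) :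
    ({e | e ∈ H ∧ e ⊆ X} : Set (Finset α)).Finite := by
  apply Set.Finite.subset (X.powerset : Finset (Finset α)).finite_toSet
  intro e he
  simpa [Finset.mem_powerset] using he.2

/-- Submodularity of the predimension. -/
lemma hdelta_submod (H : Set (Finset α)) (X Y : Finset α) :
    hdelta H (X ∪ Y) + hdelta H (X ∩ Y) ≤ hdelta H X + hdelta H Y := by
  have hcard : ((X ∪ Y).card : ℤ) + ((X ∩ Y).card : ℤ) = (X.card : ℤ) + (Y.card : ℤ) := by
    exact_mod_cast congrArg (Nat.cast : ℕ → ℤ) (Finset.card_union_add_card_inter X Y)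
  have hsub : ({e | e ∈ H ∧ e ⊆ X} : Set (Finset α)) ∪ {e | e ∈ H ∧ e ⊆ Y}
      ⊆ {e | e ∈ H ∧ e ⊆ X ∪ Y} := by
    rintro e (⟨he, hx⟩ | ⟨he, hx⟩)
    · exact ⟨he, hx.trans Finset.subset_union_left⟩
    · exact ⟨he, hx.trans Finset.subset_union_right⟩
  have hint : ({e | e ∈ H ∧ e ⊆ X} : Set (Finset α)) ∩ {e | e ∈ H ∧ e ⊆ Y}
      = {e | e ∈ H ∧ e ⊆ X ∩ Y} := by
    ext e
    constructor
    · rintro ⟨⟨he, h1⟩, ⟨_, h2⟩⟩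
      exact ⟨he, Finset.subset_inter h1 h2⟩
    · rintro ⟨he, h⟩
      exact ⟨⟨he, h.trans Finset.inter_subset_left⟩, ⟨he, h.trans Finset.inter_subset_right⟩⟩
  have h1 := Set.ncard_union_add_ncard_inter {e | e ∈ H ∧ e ⊆ X} {e | e ∈ H ∧ e ⊆ Y}
    (edges_finite H X) (edges_finite H Y)
  have h2 : (({e | e ∈ H ∧ e ⊆ X} : Set (Finset α)) ∪ {e | e ∈ H ∧ e ⊆ Y}).ncard
      ≤ ({e | e ∈ H ∧ e ⊆ X ∪ Y} : Set (Finset α)).ncard :=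
    Set.ncard_le_ncard hsub (edges_finite H (X ∪ Y))
  rw [hint] at h1
  have hr : ({e | e ∈ H ∧ e ⊆ X} : Set (Finset α)).ncard
      + ({e | e ∈ H ∧ e ⊆ Y} : Set (Finset α)).ncard
      ≤ ({e | e ∈ H ∧ e ⊆ X ∪ Y} : Set (Finset α)).ncard
      + ({e | e ∈ H ∧ e ⊆ X ∩ Y} : Set (Finset α)).ncard := by omega
  unfold hdelta
  push_cast
  have hr' : (({e | e ∈ H ∧ e ⊆ X} : Set (Finset α)).ncard : ℤ)
      + (({e | e ∈ H ∧ e ⊆ Y} : Set (Finset α)).ncard : ℤ)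
      ≤ (({e | e ∈ H ∧ e ⊆ X ∪ Y} : Set (Finset α)).ncard : ℤ)
      + (({e | e ∈ H ∧ e ⊆ X ∩ Y} : Set (Finset α)).ncard : ℤ) := by exact_mod_cast hr
  linarith

/-- if `A/B` is a good pair with `B ≤ M` and `δ(B) = d(B) ≥ 1`, then
`A ∩ acl(∅) = ∅`. -/
theorem goodPair_disjoint_aclZero (H : Set (Finset α)) (h3 : ∀ e ∈ H, e.card = 3)
    (hnonneg : ∀ X : Finset α, 0 ≤ hdelta H X)
    (A B : Finset α) (hAB : Disjoint A B)
    (hgood : GoodPair H A B)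
    (hBstrong : Strong H B)
    (hB1 : 1 ≤ hdelta H B) :
    ∀ a ∈ A, a ∉ aclZero H := by
  intro a haA hacl
  obtain ⟨D, haD, hDstrong, hD0⟩ := hacl
  obtain ⟨⟨hdisj, hBstrongIn, hdrel, hmin⟩, hedge⟩ := hgood
  -- δ(A∪B) = δ(B)
  have hAB0 : hdelta H (A ∪ B) = hdelta H B := by
    unfold drel at hdrel; linarith
  -- δ(D∪B) = δ(B)
  have hDB : hdelta H (D ∪ B) = hdelta H B := by
    have h1 := hBstrong (D ∪ B) Finset.subset_union_right
    have h2 := hdelta_submod H D B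
    have h3 := hnonneg (D ∩ B)
    linarith
  by_cases hcase : A ∩ D = A
  · -- A ⊆ D : counting contradiction
    have hAD : A ⊆ D := by
      intro x hx
      have := hcase ▸ hx
      exact (Finset.mem_inter.mp (hcase.symm ▸ hx)).2
    set G : Finset α := D ∩ B with hGdef
    have hGB : G ⊆ B := Finset.inter_subset_right
    have hdisjAG : Disjoint A G := hdisj.mono_right hGB
    -- δ(A∪G) = 0
    have hAuG : hdelta H (A ∪ G) = 0 := by
      have hs := hdelta_submod H D (A ∪ B)
      have hu : D ∪ (A ∪ B) = D ∪ B := by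
        ext x; simp only [Finset.mem_union]
        constructor
        · rintro (h | h | h) <;> first | exact Or.inl h | exact Or.inl (hAD h) | exact Or.inr h
        · rintro (h | h)
          · exact Or.inl h
          · exact Or.inr (Or.inr h)
      have hi : D ∩ (A ∪ B) = A ∪ G := by
        ext x
        simp only [Finset.mem_inter, Finset.mem_union, hGdef]
        constructor
        · rintro ⟨hD, (hA | hB)⟩
          · exact Or.inl hA
          · exact Or.inr ⟨hD, hB⟩
        · rintro (hA | ⟨hD, hB⟩)
          · exact ⟨hAD hA, Or.inl hA⟩
          · exact ⟨hD, Or.inr hB⟩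
      rw [hu, hi] at hs
      have := hnonneg (A ∪ G)
      linarith
    -- δ(G) = 0
    have hG0 : hdelta H G = 0 := by
      have hs := hdelta_submod H (A ∪ G) B
      have hu : (A ∪ G) ∪ B = A ∪ B := by
        ext x; simp only [Finset.mem_union]
        constructor
        · rintro ((h | h) | h)
          · exact Or.inl h
          · exact Or.inr (hGB h)
          · exact Or.inr h
        · rintro (h | h)
          · exact Or.inl (Or.inl h)
          · exact Or.inr h
      have hi : (A ∪ G) ∩ B = G := by
        ext x
        simp only [Finset.mem_inter, Finset.mem_union]
        constructor
        · rintro ⟨(hA | hG), hB⟩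
          · exact absurd hB (Finset.disjoint_left.mp hdisj hA)
          · exact hG
        · intro hG
          exact ⟨Or.inr hG, hGB hG⟩
      rw [hu, hi] at hs
      have := hnonneg G
      linarith
    -- pick b ∈ B \ D
    have hbex : ∃ b ∈ B, b ∉ D := by
      by_contra h
      push_neg at h
      have : G = B := by
        ext x
        simp only [hGdef, Finset.mem_inter]
        exact ⟨fun ⟨_, hx⟩ => hx, fun hx => ⟨h x hx, hx⟩⟩
      rw [this] at hG0
      linarith
    obtain ⟨b, hbB, hbD⟩ := hbex
    obtain ⟨e₀, he₀H, he₀sub, hbe₀, ⟨x, hx⟩⟩ := hedge b hbB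
    have hxe₀ : x ∈ e₀ := (Finset.mem_inter.mp hx).1
    have hxA : x ∈ A := (Finset.mem_inter.mp hx).2
    -- edge sets
    set S : Set (Finset α) := {e | e ∈ H ∧ e ⊆ A ∪ B} with hS
    set S1 : Set (Finset α) := {e | e ∈ H ∧ e ⊆ A ∪ G} with hS1
    set SB : Set (Finset α) := {e | e ∈ H ∧ e ⊆ B} with hSB
    set SG : Set (Finset α) := {e | e ∈ H ∧ e ⊆ G} with hSG
    set S2 : Set (Finset α) := SB \ SG with hS2
    have hSBfin := edges_finite H B
    have hSGfin := edges_finite H G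
    have hS1fin := edges_finite H (A ∪ G)
    have hSfin := edges_finite H (A ∪ B)
    have hS2fin : S2.Finite := hSBfin.subset Set.diff_subset
    -- SB = SG ∪ S2 disjointly
    have hSGsub : SG ⊆ SB := fun e ⟨he, h⟩ => ⟨he, h.trans hGB⟩
    have hSBcard : SB.ncard = SG.ncard + S2.ncard := by
      rw [hS2, ← Set.ncard_union_eq Set.disjoint_sdiff_right hSGfin hS2fin,
        Set.union_diff_cancel hSGsub]
    -- disjointness of S1 and S2
    have hd12 : Disjoint S1 S2 := by
      rw [Set.disjoint_left]
      rintro e ⟨heH, heAG⟩ ⟨⟨_, heB⟩, henG⟩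
      apply henG
      refine ⟨heH, fun y hy => ?_⟩
      rcases Finset.mem_union.mp (heAG hy) with hyA | hyG
      · exact (Finset.disjoint_left.mp hdisj hyA (heB hy)).elim
      · exact hyG
    -- e₀ not in S1 ∪ S2
    have he₀n1 : e₀ ∉ S1 := by
      rintro ⟨_, hsub⟩
      rcases Finset.mem_union.mp (hsub hbe₀) with h | h
      · exact Finset.disjoint_left.mp hdisj h hbB
      · exact hbD (Finset.mem_inter.mp h).1
    have he₀n2 : e₀ ∉ S2 := by
      rintro ⟨⟨_, heB⟩, _⟩
      exact Finset.disjoint_left.mp hdisj hxA (heB hxe₀)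
    -- S1 ∪ S2 ∪ {e₀} ⊆ S
    have hsubS : S1 ∪ S2 ∪ {e₀} ⊆ S := by
      rintro e ((⟨heH, h⟩ | ⟨⟨heH, h⟩, _⟩) | he)
      · exact ⟨heH, h.trans (Finset.union_subset_union Finset.Subset.rfl hGB)⟩
      · exact ⟨heH, h.trans Finset.subset_union_right⟩
      · rw [Set.mem_singleton_iff] at he
        subst he
        exact ⟨he₀H, he₀sub⟩
    have hccount : S1.ncard + S2.ncard + 1 ≤ S.ncard := by
      have h12 : (S1 ∪ S2).ncard = S1.ncard + S2.ncard :=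
        Set.ncard_union_eq hd12 hS1fin hS2fin
      have hde : Disjoint (S1 ∪ S2) {e₀} := by
        rw [Set.disjoint_singleton_right]
        rintro (h | h)
        · exact he₀n1 h
        · exact he₀n2 h
      have hall : (S1 ∪ S2 ∪ {e₀}).ncard = S1.ncard + S2.ncard + 1 := by
        rw [Set.ncard_union_eq hde (hS1fin.union hS2fin) (Set.finite_singleton e₀),
          h12, Set.ncard_singleton]
      rw [← hall]
      exact Set.ncard_le_ncard hsubS hSfin
    -- now the arithmetic
    have hcardAB : ((A ∪ B).card : ℤ) = A.card + B.card := by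
      exact_mod_cast congrArg (Nat.cast : ℕ → ℤ) (Finset.card_union_of_disjoint hdisj)
    have hcardAG : ((A ∪ G).card : ℤ) = A.card + G.card := by
      exact_mod_cast congrArg (Nat.cast : ℕ → ℤ) (Finset.card_union_of_disjoint hdisjAG)
    have e1 : (A.card : ℤ) + G.card - S1.ncard = 0 := by
      have : hdelta H (A ∪ G) = ((A ∪ G).card : ℤ) - S1.ncard := rfl
      rw [this, hcardAG] at hAuG
      linarith
    have e2 : (G.card : ℤ) - SG.ncard = 0 := hG0
    have e3 : (A.card : ℤ) + B.card - S.ncard = hdelta H B := by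
      have : hdelta H (A ∪ B) = ((A ∪ B).card : ℤ) - S.ncard := rfl
      rw [this, hcardAB] at hAB0
      linarith
    have e4 : (B.card : ℤ) - SB.ncard = hdelta H B := rfl
    have hc' : (S1.ncard : ℤ) + S2.ncard + 1 ≤ S.ncard := by exact_mod_cast hccount
    have hb' : (SB.ncard : ℤ) = SG.ncard + S2.ncard := by exact_mod_cast hSBcard
    linarith
  · -- A₀ := A ∩ D is a proper nonempty subset of A, contradiction with 0-primitivity
    set A₀ : Finset α := A ∩ D with hA₀def
    have hA₀sub : A₀ ⊆ A := Finset.inter_subset_left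
    have hA₀ne : A₀.Nonempty := ⟨a, Finset.mem_inter.mpr ⟨haA, haD⟩⟩
    have hA₀B_AB : A₀ ∪ B ⊆ A ∪ B := Finset.union_subset_union hA₀sub Finset.Subset.rfl
    have hlow : hdelta H B ≤ hdelta H (A₀ ∪ B) :=
      hBstrongIn (A₀ ∪ B) Finset.subset_union_right hA₀B_AB
    have hhigh : hdelta H (A₀ ∪ B) ≤ hdelta H B := by
      have hs := hdelta_submod H (D ∪ B) (A ∪ B)
      have hi : (D ∪ B) ∩ (A ∪ B) = A₀ ∪ B := by
        ext y
        simp only [Finset.mem_inter, Finset.mem_union, hA₀def]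
        constructor
        · rintro ⟨(hD | hB), (hA | hB')⟩
          · exact Or.inl ⟨hA, hD⟩
          · exact Or.inr hB'
          · exact Or.inr hB
          · exact Or.inr hB
        · rintro (⟨hA, hD⟩ | hB)
          · exact ⟨Or.inl hD, Or.inl hA⟩
          · exact ⟨Or.inr hB, Or.inr hB⟩
      have htop := hBstrong ((D ∪ B) ∪ (A ∪ B))
        (Finset.subset_union_right.trans Finset.subset_union_left)
      rw [hi] at hs
      linarith
    have heq : hdelta H (A₀ ∪ B) = hdelta H B := le_antisymm hhigh hlow
    have hBA₀ : B ∪ A₀ = A₀ ∪ B := Finset.union_comm _ _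
    have hBA : B ∪ A = A ∪ B := Finset.union_comm _ _
    apply hmin A₀ hA₀sub hA₀ne hcase
    refine ⟨?_, ?_, ?_⟩
    · intro Z h1 h2
      exact hBstrongIn Z h1 (h2.trans (hBA₀ ▸ hA₀B_AB))
    · intro Z h1 h2
      have : hdelta H B ≤ hdelta H Z :=
        hBstrongIn Z ((Finset.subset_union_left).trans h1) (hBA ▸ h2)
      rw [hBA₀, heq]
      exact this
    · unfold drel
      rw [heq]
      ring

end Stmt7
end

section
/- In the linear space predimension, for finite linear spaces: if C is 0-primitive over D with base B ⊆ D and |C − B| ≥ 2, then every point b ∈ B satisfies R(c₁,c₂,b) for some c₁,c₂ ∈ C, and every point of C lies in at least two instances of R. -/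
namespace Stmt8

variable {α : Type*} [DecidableEq α]

/-- A finite set is an `R`-clique (a partial line). -/
def RClique (R : α → α → α → Prop) (s : Finset α) : Prop :=
  ∀ x ∈ s, ∀ y ∈ s, ∀ z ∈ s, x ≠ y → y ≠ z → x ≠ z → R x y z

/-- `ℓ` is a (nontrivial) line of `A`: a maximal `R`-clique in `A` with at least
3 points. -/
def IsLineOf (R : α → α → α → Prop) (A ℓ : Finset α) : Prop :=
  ℓ ⊆ A ∧ 3 ≤ ℓ.card ∧ RClique R ℓ ∧
    ∀ ℓ' : Finset α, ℓ ⊆ ℓ' → ℓ' ⊆ A → RClique R ℓ' → ℓ' = ℓ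

/-- The linear-space predimension `δ(A) = |A| − Σ_{ℓ ∈ L(A)} (|ℓ| − 2)`. -/
noncomputable def ldelta (R : α → α → α → Prop) (A : Finset α) : ℤ :=
  (A.card : ℤ) - ∑ᶠ ℓ ∈ {ℓ : Finset α | IsLineOf R A ℓ}, ((ℓ.card : ℤ) - 2)

/-- Relative predimension `δ(X/Y)`. -/
noncomputable def drel (R : α → α → α → Prop) (X Y : Finset α) : ℤ :=
  ldelta R (X ∪ Y) - ldelta R Y

/-- `X ≤ Y`: `X` is strong in `Y`. -/
def StrongIn (R : α → α → α → Prop) (X Y : Finset α) : Prop :=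
  ∀ Z : Finset α, X ⊆ Z → Z ⊆ Y → ldelta R X ≤ ldelta R Z

/-- `C` is a 0-primitive extension of `D`. -/
def ZeroPrim (R : α → α → α → Prop) (C D : Finset α) : Prop :=
  Disjoint C D ∧ StrongIn R D (C ∪ D) ∧ drel R C D = 0 ∧
    ∀ C₀ : Finset α, C₀ ⊆ C → C₀.Nonempty → C₀ ≠ C →
      ¬ (StrongIn R D (D ∪ C₀) ∧ StrongIn R (D ∪ C₀) (D ∪ C) ∧ drel R C₀ D = 0)

/-- `B` is a base for `C` over `D`: a minimal subset of `D` over which `C` is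
0-primitive. -/
def IsBase (R : α → α → α → Prop) (C D B : Finset α) : Prop :=
  B ⊆ D ∧ ZeroPrim R C B ∧ ∀ B' : Finset α, B' ⊂ B → ¬ ZeroPrim R C B'

/-- An unordered `R`-triple. -/
def RTriple (R : α → α → α → Prop) (e : Finset α) : Prop :=
  ∃ x y z : α, x ≠ y ∧ y ≠ z ∧ x ≠ z ∧ e = {x, y, z} ∧ R x y z

section Lemmas

variable {R : α → α → α → Prop}

lemma rclique_mono {s t : Finset α} (h : s ⊆ t) (ht : RClique R t) : RClique R s :=
  fun x hx y hy z hz => ht x (h hx) y (h hy) z (h hz)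

lemma rclique_union (hsym : ∀ x y z, R x y z → R y x z ∧ R x z y)
    (hls : ∀ a b c d, a ≠ b → R a b c → R a b d → c ≠ d → R a c d)
    {s t : Finset α} (hs : RClique R s) (ht : RClique R t)
    {a b : α} (has : a ∈ s) (hat : a ∈ t) (hbs : b ∈ s) (hbt : b ∈ t)
    (hab : a ≠ b) : RClique R (s ∪ t) := by
  have P : ∀ x ∈ s ∪ t, x ≠ a → x ≠ b → R a b x := by
    intro x hx hxa hxb
    rcases Finset.mem_union.1 hx with h | h
    · exact hs a has b hbs x h hab hxb.symm hxa.symm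
    · exact ht a hat b hbt x h hab hxb.symm hxa.symm
  have Q : ∀ x ∈ s ∪ t, ∀ y ∈ s ∪ t, x ≠ y → x ≠ a → y ≠ a → R a x y := by
    intro x hx y hy hxy hxa hya
    by_cases hxb : x = b
    · subst hxb
      exact P y hy hya (Ne.symm hxy)
    · by_cases hyb : y = b
      · subst hyb
        exact (hsym _ _ _ (P x hx hxa hxb)).2
      · exact hls a b x y hab (P x hx hxa hxb) (P y hy hya hyb) hxy
  intro x hx y hy z hz hxy hyz hxz
  by_cases hxa : x = a
  · subst hxa; exact Q y hy z hz hyz hxy.symm hxz.symm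
  · by_cases hya : y = a
    · subst hya
      exact (hsym _ _ _ (Q x hx z hz hxz hxa hyz.symm)).1
    · by_cases hza : z = a
      · subst hza
        exact (hsym _ _ _ ((hsym _ _ _ (Q x hx y hy hxy hxa hya)).1)).2
      · have h1 : R x a y := (hsym _ _ _ (Q x hx y hy hxy hxa hya)).1
        have h2 : R x a z := (hsym _ _ _ (Q x hx z hz hxz hxa hza)).1
        exact hls x a y z hxa h1 h2 hyz


open Classical in
noncomputable def lineFinset (R : α → α → α → Prop) (W : Finset α) : Finset (Finset α) :=
  W.powerset.filter (IsLineOf R W)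

lemma mem_lineFinset {W ℓ : Finset α} : ℓ ∈ lineFinset R W ↔ IsLineOf R W ℓ := by
  classical
  simp only [lineFinset, Finset.mem_filter, Finset.mem_powerset]
  exact ⟨fun h => h.2, fun h => ⟨h.1, h⟩⟩

lemma ldelta_eq (R : α → α → α → Prop) (W : Finset α) :
    ldelta R W = (W.card : ℤ) - ∑ ℓ ∈ lineFinset R W, ((ℓ.card : ℤ) - 2) := by
  have h : {ℓ : Finset α | IsLineOf R W ℓ} = ↑(lineFinset R W) := by
    ext ℓ; simp [mem_lineFinset]
  rw [ldelta, h, finsum_mem_coe_finset]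

/-- Extend a clique inside `W` to a maximal one. -/
lemma exists_max_clique {s W : Finset α} (hsW : s ⊆ W) (hs : RClique R s) :
    ∃ m : Finset α, s ⊆ m ∧ m ⊆ W ∧ RClique R m ∧
      ∀ m' : Finset α, m ⊆ m' → m' ⊆ W → RClique R m' → m' = m := by
  classical
  set T : Finset (Finset α) := W.powerset.filter (fun t => s ⊆ t ∧ RClique R t) with hT
  have hsT : s ∈ T := by
    simp only [hT, Finset.mem_filter, Finset.mem_powerset]
    exact ⟨hsW, subset_rfl, hs⟩
  obtain ⟨m, hmT, hmax⟩ := T.exists_max_image Finset.card ⟨s, hsT⟩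
  simp only [hT, Finset.mem_filter, Finset.mem_powerset] at hmT
  refine ⟨m, hmT.2.1, hmT.1, hmT.2.2, fun m' hmm' hm'W hm' => ?_⟩
  have hm'T : m' ∈ T := by
    simp only [hT, Finset.mem_filter, Finset.mem_powerset]
    exact ⟨hm'W, hmT.2.1.trans hmm', hm'⟩
  exact (Finset.eq_of_subset_of_card_le hmm' (hmax m' hm'T)).symm

/-- A clique meeting a line in two points is contained in the line. -/
lemma subset_line_of_two (hsym : ∀ x y z, R x y z → R y x z ∧ R x z y)
    (hls : ∀ a b c d, a ≠ b → R a b c → R a b d → c ≠ d → R a c d)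
    {W ℓ s : Finset α} (hℓ : IsLineOf R W ℓ) (hs : RClique R s) (hsW : s ⊆ W)
    {a b : α} (haℓ : a ∈ ℓ) (has : a ∈ s) (hbℓ : b ∈ ℓ) (hbs : b ∈ s)
    (hab : a ≠ b) : s ⊆ ℓ := by
  have hcl : RClique R (ℓ ∪ s) :=
    rclique_union hsym hls hℓ.2.2.1 hs haℓ has hbℓ hbs hab
  have := hℓ.2.2.2 (ℓ ∪ s) Finset.subset_union_left
    (Finset.union_subset hℓ.1 hsW) hcl
  exact fun x hx => this ▸ Finset.subset_union_right hx

/-- Lines of `W.erase b` in terms of lines of `W`. -/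
lemma lineFinset_erase (hsym : ∀ x y z, R x y z → R y x z ∧ R x z y)
    (hls : ∀ a b c d, a ≠ b → R a b c → R a b d → c ≠ d → R a c d)
    {W : Finset α} {b : α} (hb : b ∈ W) :
    lineFinset R (W.erase b) =
      ((lineFinset R W).filter (fun ℓ => b ∉ ℓ)) ∪
      (((lineFinset R W).filter (fun ℓ => b ∈ ℓ ∧ 4 ≤ ℓ.card)).image
        (fun ℓ => ℓ.erase b)) := by
  ext m
  simp only [Finset.mem_union, Finset.mem_filter, Finset.mem_image, mem_lineFinset]
  constructor
  · rintro ⟨hmW, hm3, hmcl, hmmax⟩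
    have hbm : b ∉ m := fun h => (Finset.mem_erase.1 (hmW h)).1 rfl
    by_cases hcl : RClique R (insert b m)
    · right
      refine ⟨insert b m, ⟨⟨?_, ?_, hcl, ?_⟩, Finset.mem_insert_self _ _, ?_⟩, ?_⟩
      · exact Finset.insert_subset hb (hmW.trans (Finset.erase_subset _ _))
      · have := Finset.card_insert_of_notMem hbm
        omega
      · intro m' hmm' hm'W hm'cl
        have h1 : m ⊆ m'.erase b := fun x hx =>
          Finset.mem_erase.2 ⟨fun e => hbm (e ▸ hx), hmm' (Finset.mem_insert_of_mem hx)⟩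
        have h2 : m'.erase b ⊆ W.erase b := fun x hx =>
          Finset.mem_erase.2 ⟨(Finset.mem_erase.1 hx).1, hm'W (Finset.mem_erase.1 hx).2⟩
        have h3 := hmmax (m'.erase b) h1 h2 (rclique_mono (Finset.erase_subset _ _) hm'cl)
        have hbm' : b ∈ m' := hmm' (Finset.mem_insert_self _ _)
        ext x
        constructor
        · intro hx
          by_cases hxb : x = b
          · exact hxb ▸ Finset.mem_insert_self _ _
          · exact Finset.mem_insert_of_mem (h3 ▸ Finset.mem_erase.2 ⟨hxb, hx⟩)
        · intro hx
          rcases Finset.mem_insert.1 hx with h | h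
          · exact h ▸ hbm'
          · exact hmm' (Finset.mem_insert_of_mem h)
      · have := Finset.card_insert_of_notMem hbm
        omega
      · rw [Finset.erase_insert hbm]
    · left
      refine ⟨⟨hmW.trans (Finset.erase_subset _ _), hm3, hmcl, ?_⟩, hbm⟩
      intro m' hmm' hm'W hm'cl
      by_cases hbm' : b ∈ m'
      · exfalso
        have h1 : m ⊆ m'.erase b := fun x hx =>
          Finset.mem_erase.2 ⟨fun e => hbm (e ▸ hx), hmm' hx⟩
        have h2 : m'.erase b ⊆ W.erase b := fun x hx =>
          Finset.mem_erase.2 ⟨(Finset.mem_erase.1 hx).1, hm'W (Finset.mem_erase.1 hx).2⟩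
        have h3 := hmmax (m'.erase b) h1 h2 (rclique_mono (Finset.erase_subset _ _) hm'cl)
        have : insert b m ⊆ m' := by
          intro x hx
          rcases Finset.mem_insert.1 hx with h | h
          · exact h ▸ hbm'
          · exact hmm' h
        exact hcl (rclique_mono this hm'cl)
      · have h2 : m' ⊆ W.erase b := fun x hx =>
          Finset.mem_erase.2 ⟨fun e => hbm' (e ▸ hx), hm'W hx⟩
        exact hmmax m' hmm' h2 hm'cl
  · rintro (⟨⟨hℓW, hℓ3, hℓcl, hℓmax⟩, hbℓ⟩ | ⟨ℓ, ⟨⟨hℓW, hℓ3, hℓcl, hℓmax⟩, hbℓ, hℓ4⟩, rfl⟩)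
    · refine ⟨fun x hx => Finset.mem_erase.2 ⟨fun e => hbℓ (e ▸ hx), hℓW hx⟩, hℓ3, hℓcl, ?_⟩
      intro m' hmm' hm'W hm'cl
      exact hℓmax m' hmm' (hm'W.trans (Finset.erase_subset _ _)) hm'cl
    · have hcard : 3 ≤ (ℓ.erase b).card := by
        have := Finset.card_erase_of_mem hbℓ
        omega
      refine ⟨fun x hx => Finset.mem_erase.2
          ⟨(Finset.mem_erase.1 hx).1, hℓW (Finset.mem_erase.1 hx).2⟩,
        hcard, rclique_mono (Finset.erase_subset _ _) hℓcl, ?_⟩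
      intro m' hmm' hm'W hm'cl
      -- pick two points of ℓ.erase b
      obtain ⟨a₁, ha₁, a₂, ha₂, ha12⟩ := Finset.one_lt_card.1 (by omega : 1 < (ℓ.erase b).card)
      have hline : IsLineOf R W ℓ := ⟨hℓW, hℓ3, hℓcl, hℓmax⟩
      have hsub : m' ⊆ ℓ := subset_line_of_two hsym hls hline hm'cl
        (hm'W.trans (Finset.erase_subset _ _))
        (Finset.mem_of_mem_erase ha₁) (hmm' ha₁)
        (Finset.mem_of_mem_erase ha₂) (hmm' ha₂) ha12
      refine Finset.Subset.antisymm (fun x hx => Finset.mem_erase.2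
        ⟨(Finset.mem_erase.1 (hm'W hx)).1, hsub hx⟩) hmm'

/-- The deletion formula: `δ(W \ {b}) = δ(W) - 1 + #{lines of W through b}`. -/
lemma ldelta_erase (hsym : ∀ x y z, R x y z → R y x z ∧ R x z y)
    (hls : ∀ a b c d, a ≠ b → R a b c → R a b d → c ≠ d → R a c d)
    {W : Finset α} {b : α} (hb : b ∈ W) :
    ldelta R (W.erase b) =
      ldelta R W - 1 + ((lineFinset R W).filter (fun ℓ => b ∈ ℓ)).card := by
  classical
  rw [ldelta_eq, ldelta_eq, lineFinset_erase hsym hls hb]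
  have hdisj : Disjoint ((lineFinset R W).filter (fun ℓ => b ∉ ℓ))
      (((lineFinset R W).filter (fun ℓ => b ∈ ℓ ∧ 4 ≤ ℓ.card)).image (fun ℓ => ℓ.erase b)) := by
    rw [Finset.disjoint_left]
    rintro e he1 he2
    obtain ⟨ℓ, hℓ, rfl⟩ := Finset.mem_image.1 he2
    simp only [Finset.mem_filter, mem_lineFinset] at he1 hℓ
    -- ℓ.erase b is a line of W, but ℓ ⊋ ℓ.erase b is a clique in W
    have := he1.1.2.2.2 ℓ (Finset.erase_subset _ _) hℓ.1.1 hℓ.1.2.2.1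
    exact (Finset.notMem_erase b ℓ) (this ▸ hℓ.2.1)
  have hinj : ∀ ℓ₁ ∈ (lineFinset R W).filter (fun ℓ => b ∈ ℓ ∧ 4 ≤ ℓ.card),
      ∀ ℓ₂ ∈ (lineFinset R W).filter (fun ℓ => b ∈ ℓ ∧ 4 ≤ ℓ.card),
      ℓ₁.erase b = ℓ₂.erase b → ℓ₁ = ℓ₂ := by
    intro ℓ₁ h₁ ℓ₂ h₂ h
    simp only [Finset.mem_filter] at h₁ h₂
    rw [← Finset.insert_erase h₁.2.1, ← Finset.insert_erase h₂.2.1, h]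
  rw [Finset.sum_union hdisj, Finset.sum_image hinj]
  have hsum2 : ∑ ℓ ∈ (lineFinset R W).filter (fun ℓ => b ∈ ℓ ∧ 4 ≤ ℓ.card),
      (((ℓ.erase b).card : ℤ) - 2)
      = ∑ ℓ ∈ (lineFinset R W).filter (fun ℓ => b ∈ ℓ), ((ℓ.card : ℤ) - 3) := by
    have hsplit : (lineFinset R W).filter (fun ℓ => b ∈ ℓ)
        = ((lineFinset R W).filter (fun ℓ => b ∈ ℓ ∧ 4 ≤ ℓ.card)) ∪
          ((lineFinset R W).filter (fun ℓ => b ∈ ℓ ∧ ¬ 4 ≤ ℓ.card)) := by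
      rw [← Finset.filter_or]
      apply Finset.filter_congr
      intro ℓ _
      tauto
    rw [hsplit, Finset.sum_union]
    · have hzero : ∑ ℓ ∈ (lineFinset R W).filter (fun ℓ => b ∈ ℓ ∧ ¬ 4 ≤ ℓ.card),
          ((ℓ.card : ℤ) - 3) = 0 := by
        apply Finset.sum_eq_zero
        intro ℓ hℓ
        simp only [Finset.mem_filter, mem_lineFinset] at hℓ
        have h3 := hℓ.1.2.1
        have h4 := hℓ.2.2
        have : ℓ.card = 3 := by omega
        rw [this]; ring
      rw [hzero, add_zero]
      apply Finset.sum_congr rfl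
      intro ℓ hℓ
      simp only [Finset.mem_filter] at hℓ
      rw [Finset.card_erase_of_mem hℓ.2.1]
      have h4 := hℓ.2.2
      push_cast
      omega
    · rw [Finset.disjoint_left]
      intro ℓ h1 h2
      simp only [Finset.mem_filter] at h1 h2
      exact h2.2.2 h1.2.2
  rw [hsum2]
  have hsplit : ∑ ℓ ∈ lineFinset R W, ((ℓ.card : ℤ) - 2)
      = ∑ ℓ ∈ (lineFinset R W).filter (fun ℓ => b ∉ ℓ), ((ℓ.card : ℤ) - 2)
      + ∑ ℓ ∈ (lineFinset R W).filter (fun ℓ => b ∈ ℓ), ((ℓ.card : ℤ) - 2) := by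
    rw [← Finset.sum_filter_add_sum_filter_not (lineFinset R W) (fun ℓ => b ∈ ℓ)]
    exact add_comm _ _
  have hcard : (W.erase b).card = W.card - 1 := Finset.card_erase_of_mem hb
  have hWpos : 1 ≤ W.card := Finset.card_pos.2 ⟨b, hb⟩
  have hn : ∑ ℓ ∈ (lineFinset R W).filter (fun ℓ => b ∈ ℓ), ((ℓ.card : ℤ) - 3)
      = ∑ ℓ ∈ (lineFinset R W).filter (fun ℓ => b ∈ ℓ), ((ℓ.card : ℤ) - 2)
        - ((lineFinset R W).filter (fun ℓ => b ∈ ℓ)).card := by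
    have : ∀ ℓ ∈ (lineFinset R W).filter (fun ℓ => b ∈ ℓ),
        ((ℓ.card : ℤ) - 3) = ((ℓ.card : ℤ) - 2) - 1 := by intro ℓ _; ring
    rw [Finset.sum_congr rfl this, Finset.sum_sub_distrib, Finset.sum_const,
      nsmul_eq_mul, mul_one]
  rw [hn, hsplit, hcard, Nat.cast_sub hWpos]
  push_cast
  ring

/-- If every line of `A` through `b` lies in `B`, then for any `Z` between `B` and `A`,
the lines of `Z` through `b` are exactly the lines of `B` through `b`. -/
lemma lines_through_eq
    {A B Z : Finset α} {b : α} (hBZ : B ⊆ Z) (hZA : Z ⊆ A)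
    (hall : ∀ ℓ : Finset α, IsLineOf R A ℓ → b ∈ ℓ → ℓ ⊆ B) :
    (lineFinset R Z).filter (fun ℓ => b ∈ ℓ)
      = (lineFinset R B).filter (fun ℓ => b ∈ ℓ) := by
  ext m
  simp only [Finset.mem_filter, mem_lineFinset]
  constructor
  · rintro ⟨⟨hmZ, hm3, hmcl, hmmax⟩, hbm⟩
    obtain ⟨m', hmm', hm'A, hm'cl, hm'max⟩ := exists_max_clique (hmZ.trans hZA) hmcl
    have hm'line : IsLineOf R A m' :=
      ⟨hm'A, le_trans hm3 (Finset.card_le_card hmm'), hm'cl, hm'max⟩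
    have hm'B : m' ⊆ B := hall m' hm'line (hmm' hbm)
    have heq : m' = m := hmmax m' hmm' (hm'B.trans hBZ) hm'cl
    have hmB : m ⊆ B := heq ▸ hm'B
    exact ⟨⟨hmB, hm3, hmcl, fun m'' h1 h2 h3 => hmmax m'' h1 (h2.trans hBZ) h3⟩, hbm⟩
  · rintro ⟨⟨hmB, hm3, hmcl, hmmax⟩, hbm⟩
    refine ⟨⟨hmB.trans hBZ, hm3, hmcl, ?_⟩, hbm⟩
    intro m'' hmm'' hm''Z hm''cl
    obtain ⟨m', hm''m', hm'A, hm'cl, hm'max⟩ := exists_max_clique (hm''Z.trans hZA) hm''cl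
    have hm'line : IsLineOf R A m' :=
      ⟨hm'A, le_trans hm3 (Finset.card_le_card (hmm''.trans hm''m')), hm'cl, hm'max⟩
    have hm'B : m' ⊆ B := hall m' hm'line (hm''m' (hmm'' hbm))
    exact hmmax m'' hmm'' ((Finset.Subset.trans hm''m' hm'B)) hm''cl

end Lemmas

/-- in the linear-space predimension, if `C` is 0-primitive over `D` with
base `B ⊆ D` and `|C \ B| ≥ 2`, then every `b ∈ B` satisfies `R c₁ c₂ b` for some
`c₁, c₂ ∈ C`, and every point of `C` lies in at least two instances of `R`. -/
theorem base_related_and_two_relations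
    (R : α → α → α → Prop)
    (hsym : ∀ x y z, R x y z → R y x z ∧ R x z y)
    (hirr : ∀ x y z, R x y z → x ≠ y ∧ y ≠ z ∧ x ≠ z)
    (hls : ∀ a b c d, a ≠ b → R a b c → R a b d → c ≠ d → R a c d)
    (C D B : Finset α)
    (hp : ZeroPrim R C D) (hbase : IsBase R C D B)
    (hC2 : 2 ≤ (C \ B).card) :
    (∀ b ∈ B, ∃ c₁ ∈ C, ∃ c₂ ∈ C, c₁ ≠ c₂ ∧ R c₁ c₂ b) ∧
    (∀ c ∈ C, ∃ e₁ e₂ : Finset α, e₁ ≠ e₂ ∧ RTriple R e₁ ∧ RTriple R e₂ ∧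
      c ∈ e₁ ∧ c ∈ e₂ ∧ e₁ ⊆ C ∪ D ∧ e₂ ⊆ C ∪ D) := by
  classical
  obtain ⟨hBD, hzp, hbmin⟩ := hbase
  obtain ⟨hdisj, hstrong, hdrel, hmin⟩ := hzp
  have hCcard : 2 ≤ C.card := by
    rwa [Finset.sdiff_eq_self_iff_disjoint.2 hdisj] at hC2
  set A := C ∪ B with hA
  have hBA : B ⊆ A := Finset.subset_union_right
  have hCA : C ⊆ A := Finset.subset_union_left
  have hAD : A ⊆ C ∪ D := Finset.union_subset_union_right hBD
  have hBCA : B ∪ C = A := by rw [hA, Finset.union_comm]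
  have hAeq : ldelta R A = ldelta R B := by
    have h := hdrel
    unfold drel at h
    rw [← hA] at h
    linarith
  -- no line of A meets C in exactly one point
  have honept : ∀ ℓ : Finset α, IsLineOf R A ℓ → ∀ c, c ∈ ℓ → c ∈ C →
      (∀ c', c' ∈ ℓ → c' ∈ C → c' = c) → False := by
    intro ℓ hℓ c hcℓ hcC huniq
    have hcB : c ∉ B := fun h => Finset.disjoint_left.1 hdisj hcC h
    have hWA : insert c B ⊆ A := Finset.insert_subset (hCA hcC) hBA
    have hℓW : ℓ ⊆ insert c B := by
      intro x hx
      rcases Finset.mem_union.1 (hℓ.1 hx) with h | h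
      · exact Finset.mem_insert.2 (Or.inl (huniq x hx h))
      · exact Finset.mem_insert_of_mem h
    have hℓline : IsLineOf R (insert c B) ℓ :=
      ⟨hℓW, hℓ.2.1, hℓ.2.2.1, fun m h1 h2 h3 => hℓ.2.2.2 m h1 (h2.trans hWA) h3⟩
    have hk1 : 1 ≤ ((lineFinset R (insert c B)).filter (fun m => c ∈ m)).card :=
      Finset.card_pos.2 ⟨ℓ, Finset.mem_filter.2 ⟨mem_lineFinset.2 hℓline, hcℓ⟩⟩
    have hdel := ldelta_erase hsym hls (Finset.mem_insert_self c B)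
    rw [Finset.erase_insert hcB] at hdel
    have hWge : ldelta R B ≤ ldelta R (insert c B) :=
      hstrong (insert c B) (Finset.subset_insert _ _) hWA
    have hk1' : (1 : ℤ) ≤ ((lineFinset R (insert c B)).filter (fun m => c ∈ m)).card := by
      exact_mod_cast hk1
    have hWeq : ldelta R (insert c B) = ldelta R B := by linarith
    have hne : ({c} : Finset α) ≠ C := by
      intro h
      have : C.card = 1 := by rw [← h]; simp
      omega
    refine hmin {c} (Finset.singleton_subset_iff.2 hcC) ⟨c, Finset.mem_singleton_self c⟩ hne
      ⟨?_, ?_, ?_⟩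
    · intro Z h1 h2
      exact hstrong Z h1 (h2.trans (Finset.union_subset hBA (Finset.singleton_subset_iff.2 (hCA hcC))))
    · intro Z h1 h2
      have hBc : B ∪ {c} = insert c B := by
        rw [Finset.union_comm, ← Finset.insert_eq]
      rw [hBc, hWeq]
      exact hstrong Z (Finset.subset_union_left.trans h1) (h2.trans (le_of_eq hBCA))
    · unfold drel
      rw [← Finset.insert_eq, hWeq]
      ring
  -- PART 1
  have part1 : ∀ b ∈ B, ∃ c₁ ∈ C, ∃ c₂ ∈ C, c₁ ≠ c₂ ∧ R c₁ c₂ b := by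
    intro b hb
    by_contra hno
    push_neg at hno
    have hbC : b ∉ C := fun h => Finset.disjoint_left.1 hdisj h hb
    have hall : ∀ ℓ : Finset α, IsLineOf R A ℓ → b ∈ ℓ → ℓ ⊆ B := by
      intro ℓ hℓ hbℓ x hx
      rcases Finset.mem_union.1 (hℓ.1 hx) with hxC | hxB
      · exfalso
        apply honept ℓ hℓ x hx hxC
        intro c' hc'ℓ hc'C
        by_contra hne
        have hxb : x ≠ b := fun e => hbC (e ▸ hxC)
        have hc'b : c' ≠ b := fun e => hbC (e ▸ hc'C)
        have hxc' : x ≠ c' := fun e => hne e.symm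
        exact hno x hxC c' hc'C hxc' (hℓ.2.2.1 x hx c' hc'ℓ b hbℓ hxc' hc'b hxb)
      · exact hxB
    have hkey : ∀ Z : Finset α, B ⊆ Z → Z ⊆ A →
        ldelta R (Z.erase b) = ldelta R Z - 1 +
          ((lineFinset R B).filter (fun ℓ => b ∈ ℓ)).card := by
      intro Z h1 h2
      rw [ldelta_erase hsym hls (h1 hb), lines_through_eq h1 h2 hall]
    have hkeyB := hkey B (subset_rfl) hBA
    have hkeyA := hkey A hBA (subset_rfl)
    have hAerase : A.erase b = C ∪ B.erase b := by
      rw [hA, Finset.erase_union_distrib, Finset.erase_eq_self.2 hbC]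
    have hzp' : ZeroPrim R C (B.erase b) := by
      refine ⟨Finset.disjoint_of_subset_right (Finset.erase_subset _ _) hdisj, ?_, ?_, ?_⟩
      · -- strong
        intro Z' h1 h2
        rw [← hAerase] at h2
        have hbZ' : b ∉ Z' := fun h => Finset.notMem_erase b A (h2 h)
        have hBZ : B ⊆ insert b Z' := by
          intro x hx
          by_cases hxb : x = b
          · exact hxb ▸ Finset.mem_insert_self _ _
          · exact Finset.mem_insert_of_mem (h1 (Finset.mem_erase.2 ⟨hxb, hx⟩))
        have hZA : insert b Z' ⊆ A :=
          Finset.insert_subset (hBA hb) (h2.trans (Finset.erase_subset _ _))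
        have hkeyZ := hkey (insert b Z') hBZ hZA
        rw [Finset.erase_insert hbZ'] at hkeyZ
        have := hstrong (insert b Z') hBZ hZA
        linarith
      · -- drel = 0
        unfold drel
        rw [← hAerase, hkeyA, hkeyB, hAeq]
        ring
      · -- minimality
        intro C₀ hC₀C hC₀ne hC₀neC htr
        obtain ⟨s1, s2, s3⟩ := htr
        have hbC₀ : b ∉ C₀ := fun h => hbC (hC₀C h)
        have hBC₀A : B ∪ C₀ ⊆ A := Finset.union_subset hBA (hC₀C.trans hCA)
        have hkeyBC₀ := hkey (B ∪ C₀) Finset.subset_union_left hBC₀A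
        have herBC₀ : (B ∪ C₀).erase b = B.erase b ∪ C₀ := by
          rw [Finset.erase_union_distrib, Finset.erase_eq_self.2 hbC₀]
        rw [herBC₀] at hkeyBC₀
        refine hmin C₀ hC₀C hC₀ne hC₀neC ⟨?_, ?_, ?_⟩
        · intro Z h1 h2
          exact hstrong Z h1 (h2.trans hBC₀A)
        · intro Z h1 h2
          have hbZ : b ∈ Z := h1 (Finset.mem_union_left _ hb)
          have hBZ : B ⊆ Z := Finset.subset_union_left.trans h1
          have hZA : Z ⊆ A := h2.trans (le_of_eq hBCA)
          have hkeyZ := hkey Z hBZ hZA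
          have hsub1 : B.erase b ∪ C₀ ⊆ Z.erase b := by
            intro x hx
            rcases Finset.mem_union.1 hx with h | h
            · exact Finset.mem_erase.2 ⟨(Finset.mem_erase.1 h).1, hBZ (Finset.mem_erase.1 h).2⟩
            · refine Finset.mem_erase.2 ⟨fun e => hbC₀ (e ▸ h), h1 (Finset.mem_union_right _ h)⟩
          have hsub2 : Z.erase b ⊆ B.erase b ∪ C := by
            intro x hx
            obtain ⟨hxb, hxZ⟩ := Finset.mem_erase.1 hx
            rcases Finset.mem_union.1 (h2 hxZ) with h | h
            · exact Finset.mem_union_left _ (Finset.mem_erase.2 ⟨hxb, h⟩)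
            · exact Finset.mem_union_right _ h
          have := s2 (Z.erase b) hsub1 hsub2
          linarith
        · have hCB₀A : C₀ ∪ B ⊆ A := Finset.union_subset (hC₀C.trans hCA) hBA
          have hkeyCB₀ := hkey (C₀ ∪ B) Finset.subset_union_right hCB₀A
          have herCB₀ : (C₀ ∪ B).erase b = C₀ ∪ B.erase b := by
            rw [Finset.erase_union_distrib, Finset.erase_eq_self.2 hbC₀]
          rw [herCB₀] at hkeyCB₀
          unfold drel at s3 ⊢
          linarith
    exact hbmin (B.erase b) (Finset.erase_ssubset hb) hzp'
  -- PART 2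
  have part2 : ∀ c ∈ C, ∃ e₁ e₂ : Finset α, e₁ ≠ e₂ ∧ RTriple R e₁ ∧ RTriple R e₂ ∧
      c ∈ e₁ ∧ c ∈ e₂ ∧ e₁ ⊆ C ∪ D ∧ e₂ ⊆ C ∪ D := by
    intro c hc
    have hcB : c ∉ B := fun h => Finset.disjoint_left.1 hdisj hc h
    have hcA : c ∈ A := hCA hc
    have hdel := ldelta_erase hsym hls hcA
    have hBsub : B ⊆ A.erase c := fun x hx =>
      Finset.mem_erase.2 ⟨fun e => hcB (e ▸ hx), hBA hx⟩
    have h2le : 2 ≤ ((lineFinset R A).filter (fun ℓ => c ∈ ℓ)).card := by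
      by_contra hlt
      push_neg at hlt
      have hge := hstrong (A.erase c) hBsub (Finset.erase_subset _ _)
      have hk1 : 1 ≤ ((lineFinset R A).filter (fun ℓ => c ∈ ℓ)).card := by
        by_contra h0
        push_neg at h0
        have : ((lineFinset R A).filter (fun ℓ => c ∈ ℓ)).card = 0 := by omega
        rw [this] at hdel
        push_cast at hdel
        linarith
      have hcard1 : ((lineFinset R A).filter (fun ℓ => c ∈ ℓ)).card = 1 := by omega
      rw [hcard1] at hdel
      push_cast at hdel
      have hδ : ldelta R (A.erase c) = ldelta R B := by linarith
      have hBCe : B ∪ C.erase c = A.erase c := by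
        rw [hA, Finset.erase_union_distrib, Finset.erase_eq_self.2 hcB, Finset.union_comm]
      have hCene : C.erase c ≠ C := (Finset.erase_ssubset hc).ne
      have hCenon : (C.erase c).Nonempty := by
        rw [← Finset.card_pos, Finset.card_erase_of_mem hc]
        omega
      refine hmin (C.erase c) (Finset.erase_subset _ _) hCenon hCene ⟨?_, ?_, ?_⟩
      · intro Z h1 h2
        exact hstrong Z h1 (h2.trans (hBCe.symm ▸ (Finset.erase_subset c A)))
      · intro Z h1 h2
        rw [hBCe, hδ]
        have hZA : Z ⊆ A := h2.trans (le_of_eq hBCA)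
        by_cases hcZ : c ∈ Z
        · have hZeq : Z = A := by
            apply Finset.Subset.antisymm hZA
            intro x hx
            by_cases hxc : x = c
            · exact hxc ▸ hcZ
            · exact (hBCe ▸ h1) (Finset.mem_erase.2 ⟨hxc, hx⟩)
          rw [hZeq, hAeq]
        · have hZeq : Z = A.erase c := by
            apply Finset.Subset.antisymm
            · exact fun x hx => Finset.mem_erase.2 ⟨fun e => hcZ (e ▸ hx), hZA hx⟩
            · exact hBCe ▸ h1
          rw [hZeq, hδ]
      · unfold drel
        rw [Finset.union_comm, hBCe, hδ]
        ring
    obtain ⟨ℓ₁, h1, ℓ₂, h2, hℓne⟩ := Finset.one_lt_card.1 h2le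
    rw [Finset.mem_filter, mem_lineFinset] at h1 h2
    have hmeet : ∀ x, x ∈ ℓ₁ → x ∈ ℓ₂ → x = c := by
      intro x hx1 hx2
      by_contra hxc
      have hcx : c ≠ x := fun e => hxc e.symm
      have hs : ℓ₂ ⊆ ℓ₁ :=
        subset_line_of_two hsym hls h1.1 h2.1.2.2.1 h2.1.1 h1.2 h2.2 hx1 hx2 hcx
      have hs' : ℓ₁ ⊆ ℓ₂ :=
        subset_line_of_two hsym hls h2.1 h1.1.2.2.1 h1.1.1 h2.2 h1.2 hx2 hx1 hcx
      exact hℓne (Finset.Subset.antisymm hs' hs)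
    have hpick : ∀ ℓ : Finset α, IsLineOf R A ℓ → c ∈ ℓ →
        ∃ x y, x ∈ ℓ ∧ y ∈ ℓ ∧ x ≠ c ∧ y ≠ c ∧ x ≠ y := by
      intro ℓ hℓ hcl
      have h2e : 1 < (ℓ.erase c).card := by
        rw [Finset.card_erase_of_mem hcl]
        have := hℓ.2.1
        omega
      obtain ⟨x, hx, y, hy, hxy⟩ := Finset.one_lt_card.1 h2e
      exact ⟨x, y, Finset.mem_of_mem_erase hx, Finset.mem_of_mem_erase hy,
        (Finset.mem_erase.1 hx).1, (Finset.mem_erase.1 hy).1, hxy⟩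
    obtain ⟨x₁, y₁, hx₁, hy₁, hx₁c, hy₁c, hxy₁⟩ := hpick ℓ₁ h1.1 h1.2
    obtain ⟨x₂, y₂, hx₂, hy₂, hx₂c, hy₂c, hxy₂⟩ := hpick ℓ₂ h2.1 h2.2
    have hsub₁ : ({c, x₁, y₁} : Finset α) ⊆ ℓ₁ := by
      intro z hz
      rcases Finset.mem_insert.1 hz with rfl | hz
      · exact h1.2
      · rcases Finset.mem_insert.1 hz with rfl | hz
        · exact hx₁
        · exact (Finset.mem_singleton.1 hz) ▸ hy₁
    have hsub₂ : ({c, x₂, y₂} : Finset α) ⊆ ℓ₂ := by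
      intro z hz
      rcases Finset.mem_insert.1 hz with rfl | hz
      · exact h2.2
      · rcases Finset.mem_insert.1 hz with rfl | hz
        · exact hx₂
        · exact (Finset.mem_singleton.1 hz) ▸ hy₂
    refine ⟨{c, x₁, y₁}, {c, x₂, y₂}, ?_, ?_, ?_, ?_, ?_, ?_, ?_⟩
    · intro he
      have : x₁ ∈ ℓ₂ := hsub₂ (he ▸ (by simp : x₁ ∈ ({c, x₁, y₁} : Finset α)))
      exact hx₁c (hmeet x₁ hx₁ this)
    · exact ⟨c, x₁, y₁, (Ne.symm hx₁c), hxy₁, (Ne.symm hy₁c), rfl,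
        h1.1.2.2.1 c h1.2 x₁ hx₁ y₁ hy₁ (Ne.symm hx₁c) hxy₁ (Ne.symm hy₁c)⟩
    · exact ⟨c, x₂, y₂, (Ne.symm hx₂c), hxy₂, (Ne.symm hy₂c), rfl,
        h2.1.2.2.1 c h2.2 x₂ hx₂ y₂ hy₂ (Ne.symm hx₂c) hxy₂ (Ne.symm hy₂c)⟩
    · exact Finset.mem_insert_self _ _
    · exact Finset.mem_insert_self _ _
    · exact hsub₁.trans (h1.1.1.trans hAD)
    · exact hsub₂.trans (h2.1.1.trans hAD)
  exact ⟨part1, part2⟩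

end Stmt8
end

section
/- Let δ be a flat predimension on a class of finite structures, and let d be the induced dimension in a model M. For finitely many finite-dimensional d-closed subsets F₁,...,F_s of M, the inclusion–exclusion inequality holds: d(F₁ ∪ ⋯ ∪ F_s) ≤ Σ_{∅≠T⊆{1,...,s}} (−1)^{|T|+1} d(F_T), where F_T = ∩_{i∈T} Fᵢ. -/
namespace Stmt15

variable {α : Type*} [DecidableEq α]

/-- The dimension induced by a predimension `δ`: `d(X)` is the least value of `δ` on
finite supersets of `X` (with `δ` nonnegative). -/
noncomputable def dimf (δ : Finset α → ℤ) (X : Finset α) : ℕ :=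
  sInf {n : ℕ | ∃ Y : Finset α, X ⊆ Y ∧ δ Y = (n : ℤ)}

/-- `δ` is flat: the inclusion–exclusion inequality holds for `δ` on finite sets. -/
def DeltaFlat (δ : Finset α → ℤ) : Prop :=
  ∀ (k : ℕ) (F : Fin k → Finset α),
    δ (Finset.univ.biUnion F) ≤
      ∑ T ∈ Finset.univ.powerset.filter (Finset.Nonempty (α := Fin k)),
        (-1 : ℤ) ^ (T.card + 1) *
          δ ((Finset.univ.biUnion F).filter (fun x => ∀ i ∈ T, x ∈ F i))

/-- The dimension of a (possibly infinite) subset of `M`. -/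
noncomputable def dimSet (δ : Finset α → ℤ) (A : Set α) : ℕ :=
  sSup {n : ℕ | ∃ s : Finset α, (↑s : Set α) ⊆ A ∧ dimf δ s = n}

/-- `A` is `d`-closed: `d(a/A) = 0` implies `a ∈ A`. -/
def DClosed (δ : Finset α → ℤ) (A : Set α) : Prop :=
  ∀ a : α, (∃ s : Finset α, (↑s : Set α) ⊆ A ∧ dimf δ (insert a s) = dimf δ s) → a ∈ A

/-- `A` is finite-dimensional. -/
def FinDim (δ : Finset α → ℤ) (A : Set α) : Prop :=
  ∃ N : ℕ, ∀ s : Finset α, (↑s : Set α) ⊆ A → dimf δ s ≤ N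

theorem dimf_spec (δ : Finset α → ℤ) (hnonneg : ∀ X : Finset α, 0 ≤ δ X) (X : Finset α) :
    ∃ Y, X ⊆ Y ∧ δ Y = (dimf δ X : ℤ) := by
  have : dimf δ X ∈ {n : ℕ | ∃ Y : Finset α, X ⊆ Y ∧ δ Y = (n : ℤ)} :=
    Nat.sInf_mem ⟨(δ X).toNat, X, subset_rfl, (Int.toNat_of_nonneg (hnonneg X)).symm⟩
  exact this

theorem dimf_le (δ : Finset α → ℤ) (hnonneg : ∀ X : Finset α, 0 ≤ δ X) {X Y : Finset α}
    (h : X ⊆ Y) : (dimf δ X : ℤ) ≤ δ Y := by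
  have h1 : dimf δ X ≤ (δ Y).toNat :=
    Nat.sInf_le ⟨Y, h, (Int.toNat_of_nonneg (hnonneg Y)).symm⟩
  calc (dimf δ X : ℤ) ≤ ((δ Y).toNat : ℤ) := by exact_mod_cast h1
    _ = δ Y := Int.toNat_of_nonneg (hnonneg Y)

theorem dimf_mono (δ : Finset α → ℤ) (hnonneg : ∀ X : Finset α, 0 ≤ δ X) {X X' : Finset α}
    (h : X ⊆ X') : dimf δ X ≤ dimf δ X' := by
  obtain ⟨Y, hY1, hY2⟩ := dimf_spec δ hnonneg X'
  have := dimf_le δ hnonneg (h.trans hY1)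
  rw [hY2] at this
  exact_mod_cast this

def Strong (δ : Finset α → ℤ) (Y : Finset α) : Prop := ∀ Z, Y ⊆ Z → δ Y ≤ δ Z

theorem delta_submod (δ : Finset α → ℤ) (hflat : DeltaFlat δ) (A B : Finset α) :
    δ (A ∪ B) ≤ δ A + δ B - δ (A ∩ B) := by
  have h := hflat 2 ![A, B]
  have hu : Finset.univ.biUnion ![A, B] = A ∪ B := by
    ext x
    simp [Fin.exists_fin_two]
  rw [hu] at h
  have hp : (Finset.univ.powerset.filter (Finset.Nonempty (α := Fin 2)))
      = {{0}, {1}, {0, 1}} := by decide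
  rw [hp] at h
  rw [Finset.sum_insert (by decide), Finset.sum_insert (by decide),
    Finset.sum_singleton] at h
  have e0 : ((A ∪ B).filter (fun x => ∀ i ∈ ({0} : Finset (Fin 2)), x ∈ ![A, B] i)) = A := by
    ext x; simp
  have e1 : ((A ∪ B).filter (fun x => ∀ i ∈ ({1} : Finset (Fin 2)), x ∈ ![A, B] i)) = B := by
    ext x; simp
  have e01 : ((A ∪ B).filter (fun x => ∀ i ∈ ({0, 1} : Finset (Fin 2)), x ∈ ![A, B] i)) = A ∩ B := by
    ext x; simp [Fin.forall_fin_two]; tauto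
  rw [e0, e1, e01] at h
  have c0 : ({0} : Finset (Fin 2)).card = 1 := by decide
  have c1 : ({1} : Finset (Fin 2)).card = 1 := by decide
  have c01 : ({0, 1} : Finset (Fin 2)).card = 2 := by decide
  rw [c0, c1, c01] at h
  norm_num at h
  linarith

theorem strong_inter_delta (δ : Finset α → ℤ) (hflat : DeltaFlat δ) {Y : Finset α}
    (hY : Strong δ Y) (B : Finset α) : δ (Y ∩ B) ≤ δ B := by
  have h1 := delta_submod δ hflat Y B
  have h2 := hY (Y ∪ B) Finset.subset_union_left
  linarith

theorem strong_inter (δ : Finset α → ℤ) (hflat : DeltaFlat δ) {Y W : Finset α}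
    (hY : Strong δ Y) (hW : Strong δ W) : Strong δ (Y ∩ W) := by
  intro Z hZ
  have key : Y ∩ W = Y ∩ (W ∩ Z) := by
    ext x
    simp only [Finset.mem_inter]
    exact ⟨fun h => ⟨h.1, h.2, hZ (Finset.mem_inter.2 h)⟩, fun h => ⟨h.1, h.2.1⟩⟩
  rw [key]
  exact (strong_inter_delta δ hflat hY (W ∩ Z)).trans (strong_inter_delta δ hflat hW Z)

theorem dimSet_bddAbove (δ : Finset α → ℤ) {A : Set α} (hA : FinDim δ A) :
    BddAbove {n : ℕ | ∃ s : Finset α, (↑s : Set α) ⊆ A ∧ dimf δ s = n} := by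
  obtain ⟨N, hN⟩ := hA
  exact ⟨N, fun n ⟨s, hs, hd⟩ => hd ▸ hN s hs⟩

theorem dimf_le_dimSet (δ : Finset α → ℤ) {A : Set α} (hA : FinDim δ A) {t : Finset α}
    (ht : (↑t : Set α) ⊆ A) : dimf δ t ≤ dimSet δ A :=
  le_csSup (dimSet_bddAbove δ hA) ⟨t, ht, rfl⟩

theorem dimSet_attained (δ : Finset α → ℤ) {A : Set α} (hA : FinDim δ A) :
    ∃ t : Finset α, (↑t : Set α) ⊆ A ∧ dimf δ t = dimSet δ A := by
  have hne : {n : ℕ | ∃ s : Finset α, (↑s : Set α) ⊆ A ∧ dimf δ s = n}.Nonempty :=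
    ⟨dimf δ ∅, ∅, by simp, rfl⟩
  have := Nat.sSup_mem hne (dimSet_bddAbove δ hA)
  exact this


/-- if `δ` is a flat predimension then the induced dimension `d` satisfies
the inclusion–exclusion inequality on finite-dimensional `d`-closed subsets. -/
theorem flat_dim_inclusion_exclusion
    (δ : Finset α → ℤ) (hnonneg : ∀ X : Finset α, 0 ≤ δ X)
    (hflat : DeltaFlat δ)
    (k : ℕ) (F : Fin k → Set α)
    (hF : ∀ i, DClosed δ (F i) ∧ FinDim δ (F i)) :
    (dimSet δ (⋃ i, F i) : ℤ) ≤
      ∑ T ∈ Finset.univ.powerset.filter (Finset.Nonempty (α := Fin k)),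
        (-1 : ℤ) ^ (T.card + 1) * dimSet δ (⋂ i ∈ T, F i) := by
  classical
  set P : Finset (Finset (Fin k)) :=
    Finset.univ.powerset.filter (Finset.Nonempty (α := Fin k)) with hPdef
  set FT : Finset (Fin k) → Set α := fun T => ⋂ i ∈ T, F i with hFTdef
  set R : ℤ := ∑ T ∈ P, (-1 : ℤ) ^ (T.card + 1) * dimSet δ (FT T) with hRdef
  -- finite-dimensionality of intersections
  have hFTfin : ∀ T : Finset (Fin k), T.Nonempty → FinDim δ (FT T) := by
    rintro T ⟨i, hi⟩
    obtain ⟨N, hN⟩ := (hF i).2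
    refine ⟨N, fun s hs => hN s (hs.trans ?_)⟩
    exact Set.biInter_subset_of_mem hi
  -- main bound for finite subsets of the union
  have key : ∀ t : Finset α, (↑t : Set α) ⊆ (⋃ i, F i) → (dimf δ t : ℤ) ≤ R := by
    intro t ht
    -- choose maximal-dimension finite subsets of each intersection
    have hsf : ∀ T : Finset (Fin k), ∃ tT : Finset α, (↑tT : Set α) ⊆ FT T ∧
        (T.Nonempty → dimf δ tT = dimSet δ (FT T)) := by
      intro T
      by_cases hT : T.Nonempty
      · obtain ⟨tT, h1, h2⟩ := dimSet_attained δ (hFTfin T hT)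
        exact ⟨tT, h1, fun _ => h2⟩
      · exact ⟨∅, by simp, fun h => absurd h hT⟩
    choose sfun hsfsub hsfdim using hsf
    -- base sets
    set Afun : Fin k → Finset α := fun i =>
      t.filter (fun x => x ∈ F i) ∪ (P.filter (fun T => i ∈ T)).biUnion sfun with hAdef
    have hAsub : ∀ i, (↑(Afun i) : Set α) ⊆ F i := by
      intro i x hx
      simp only [hAdef, Finset.coe_union, Set.mem_union, Finset.coe_filter,
        Set.mem_setOf_eq, Finset.mem_coe, Finset.mem_biUnion, Finset.mem_filter] at hx
      rcases hx with ⟨_, h⟩ | ⟨T, ⟨_, hiT⟩, hxT⟩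
      · exact h
      · exact Set.biInter_subset_of_mem hiT (hsfsub T hxT)
    have hsfA : ∀ T ∈ P, ∀ i ∈ T, sfun T ⊆ Afun i := by
      intro T hT i hi
      intro x hx
      simp only [hAdef, Finset.mem_union, Finset.mem_biUnion, Finset.mem_filter]
      exact Or.inr ⟨T, ⟨hT, hi⟩, hx⟩
    -- minimal witnesses
    have hYex : ∀ i, ∃ Yi : Finset α, Afun i ⊆ Yi ∧ δ Yi = (dimf δ (Afun i) : ℤ) :=
      fun i => dimf_spec δ hnonneg (Afun i)
    choose Y hYsub hYval using hYex
    have hYstrong : ∀ i, Strong δ (Y i) := by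
      intro i Z hZ
      rw [hYval i]
      exact dimf_le δ hnonneg ((hYsub i).trans hZ)
    have hYF : ∀ i, (↑(Y i) : Set α) ⊆ F i := by
      intro i a ha
      apply (hF i).1 a
      refine ⟨Afun i, hAsub i, le_antisymm ?_ (dimf_mono δ hnonneg (Finset.subset_insert a _))⟩
      have h1 : insert a (Afun i) ⊆ Y i := Finset.insert_subset ha (hYsub i)
      have h2 := dimf_le δ hnonneg h1
      rw [hYval i] at h2
      exact_mod_cast h2
    -- the intersections of the Y's
    set NT : Finset (Fin k) → Finset α := fun T =>
      (Finset.univ.biUnion Y).filter (fun x => ∀ i ∈ T, x ∈ Y i) with hNTdef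
    have hNTmem : ∀ T : Finset (Fin k), T.Nonempty → ∀ x,
        (x ∈ NT T ↔ ∀ i ∈ T, x ∈ Y i) := by
      rintro T ⟨i0, hi0⟩ x
      simp only [hNTdef, Finset.mem_filter, Finset.mem_biUnion, Finset.mem_univ, true_and,
        and_iff_right_iff_imp]
      exact fun h => ⟨i0, h i0 hi0⟩
    have hNTsingle : ∀ i : Fin k, NT {i} = Y i := by
      intro i
      ext x
      rw [hNTmem {i} ⟨i, Finset.mem_singleton_self i⟩]
      simp
    have hNTcons : ∀ (a : Fin k) (T : Finset (Fin k)) (ha : a ∉ T), T.Nonempty →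
        NT (Finset.cons a T ha) = Y a ∩ NT T := by
      intro a T ha hT
      ext x
      rw [hNTmem _ (Finset.cons_nonempty ha), Finset.mem_inter, hNTmem T hT]
      simp [Finset.mem_cons, forall_eq_or_imp]
    have hNTstrong : ∀ T : Finset (Fin k), T.Nonempty → Strong δ (NT T) := by
      intro T hT
      induction hT using Finset.Nonempty.cons_induction with
      | singleton a => rw [hNTsingle]; exact hYstrong a
      | cons a s ha hs ih =>
        rw [hNTcons a s ha hs]
        exact strong_inter δ hflat (hYstrong a) ih
    have hNTsub : ∀ T : Finset (Fin k), T.Nonempty → (↑(NT T) : Set α) ⊆ FT T := by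
      intro T hT x hx
      rw [Finset.mem_coe, hNTmem T hT] at hx
      exact Set.mem_biInter fun i hi => hYF i (hx i hi)
    have hsfNT : ∀ T ∈ P, sfun T ⊆ NT T := by
      intro T hT
      have hTne : T.Nonempty := (Finset.mem_filter.1 hT).2
      intro x hx
      rw [hNTmem T hTne]
      exact fun i hi => (hsfA T hT i hi) hx |> (hYsub i)
    -- δ (NT T) = dimSet (FT T)
    have hNTval : ∀ T ∈ P, δ (NT T) = (dimSet δ (FT T) : ℤ) := by
      intro T hT
      have hTne : T.Nonempty := (Finset.mem_filter.1 hT).2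
      apply le_antisymm
      · obtain ⟨Z, hZ1, hZ2⟩ := dimf_spec δ hnonneg (NT T)
        have h1 : δ (NT T) ≤ (dimf δ (NT T) : ℤ) := hZ2 ▸ hNTstrong T hTne Z hZ1
        have h2 : dimf δ (NT T) ≤ dimSet δ (FT T) :=
          dimf_le_dimSet δ (hFTfin T hTne) (hNTsub T hTne)
        exact h1.trans (by exact_mod_cast h2)
      · have h1 : dimSet δ (FT T) ≤ dimf δ (NT T) := by
          rw [← hsfdim T hTne]
          exact dimf_mono δ hnonneg (hsfNT T hT)
        have h2 : (dimf δ (NT T) : ℤ) ≤ δ (NT T) := dimf_le δ hnonneg subset_rfl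
        exact le_trans (by exact_mod_cast h1) h2
    -- apply flatness
    have hflatY := hflat k Y
    have htY : t ⊆ Finset.univ.biUnion Y := by
      intro x hx
      have : (x : α) ∈ ⋃ i, F i := ht hx
      obtain ⟨i, hi⟩ := Set.mem_iUnion.1 this
      refine Finset.mem_biUnion.2 ⟨i, Finset.mem_univ i, hYsub i ?_⟩
      simp only [hAdef, Finset.mem_union, Finset.mem_filter]
      exact Or.inl ⟨hx, hi⟩
    calc (dimf δ t : ℤ) ≤ δ (Finset.univ.biUnion Y) := dimf_le δ hnonneg htY
      _ ≤ ∑ T ∈ P, (-1 : ℤ) ^ (T.card + 1) * δ (NT T) := hflatY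
      _ = R := Finset.sum_congr rfl fun T hT => by rw [hNTval T hT]
  -- conclude
  have hR0 : 0 ≤ R := le_trans (by positivity) (key ∅ (by simp))
  have hfin : FinDim δ (⋃ i, F i) := by
    refine ⟨R.toNat, fun s hs => ?_⟩
    have h1 := key s hs
    have : (dimf δ s : ℤ) ≤ (R.toNat : ℤ) := by rwa [Int.toNat_of_nonneg hR0]
    exact_mod_cast this
  obtain ⟨t, ht1, ht2⟩ := dimSet_attained δ hfin
  rw [← ht2]
  exact key t ht1

end Stmt15
end
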